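/- For any word w with ι(w) = k and any s ∈ ℕ, k ≤ ι(w^s) − ι(w^{s−1}) ≤ k + 1. -/

import Mathlib

open List

variable {α : Type*}

/-- `w` is `k`-universal: every word of length `k` over the alphabet `α`
is a scattered factor (subsequence) of `w`. -/
def IsUniversal [Fintype α] (k : ℕ) (w : List α) : Prop :=
  ∀ u : List α, u.length = k → u.Sublist w

/-- The universality index `ι(w)`: the largest `k` such that `w` is `k`-universal. -/
noncomputable def univIndex [Fintype α] (w : List α) : ℕ :=
  sSup {k | IsUniversal k w}

/-- The circular universality index `ζ(w)`: the largest `k` such that some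
conjugate of `w` is `k`-universal. -/
noncomputable def circIndex [Fintype α] (w : List α) : ℕ :=
  sSup {k | ∃ u v : List α, w = u ++ v ∧ IsUniversal k (v ++ u)}

/-- `wpow w s = w^s`, the `s`-fold concatenation of `w`. -/
def wpow (w : List α) (s : ℕ) : List α := (List.replicate s w).flatten

/-- Auxiliary (fuelled) computation of the remainder of the arch factorisation:
greedily remove the shortest prefix containing every letter of the alphabet. -/
def remAux [Fintype α] [DecidableEq α] : ℕ → List α → List α
  | 0, w => w
  | (n+1), w =>
    match (List.range' 1 w.length).find?
        (fun m => decide ((w.take m).toFinset = Finset.univ)) with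
    | none => w
    | some m => remAux n (w.drop m)

/-- `rem w = r(w)`, the remainder of the arch factorisation of `w`. -/
def rem [Fintype α] [DecidableEq α] (w : List α) : List α := remAux w.length w

/-- Auxiliary (fuelled) computation of the list of arches of `w`. -/
def archesAux [Fintype α] [DecidableEq α] : ℕ → List α → List (List α)
  | 0, _ => []
  | (n+1), w =>
    match (List.range' 1 w.length).find?
        (fun m => decide ((w.take m).toFinset = Finset.univ)) with
    | none => []
    | some m => (w.take m) :: archesAux n (w.drop m)

/-- `arches w`: the list `[arch₁(w), …, arch_{ι(w)}(w)]` of arches of `w`. -/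
def arches [Fintype α] [DecidableEq α] (w : List α) : List (List α) :=
  archesAux w.length w

/-!
Since `w^s = w · w^(s-1)`, both bounds are instances of
`ι(x) + ι(y) ≤ ι(xy) ≤ ι(x) + ι(y) + 1`. The lower bound splits a word of length
`ι(x) + ι(y)` into a prefix embedded in `x` and a suffix embedded in `y`. For the upper
bound, pick words `u`, `v` of lengths `ι(x) + 1`, `ι(y) + 1` that are not subsequences of
`x`, `y`; any embedding of `uv` into `xy` would embed `u` into `x` or `v` into `y`.
-/

lemma List.Sublist.left_or_right_of_append {u v x y : List α}
    (h : (u ++ v).Sublist (x ++ y)) : u.Sublist x ∨ v.Sublist y := by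
  obtain ⟨p, q, hpq, hp, hq⟩ := List.sublist_append_iff.mp h
  rcases List.append_eq_append_iff.mp hpq with ⟨c, rfl, -⟩ | ⟨c, -, rfl⟩
  · exact .inl ((List.sublist_append_left u c).trans hp)
  · exact .inr ((List.sublist_append_right c v).trans hq)

section Universality

variable [Fintype α]

lemma isUniversal_zero (w : List α) : IsUniversal 0 w := by
  intro u hu
  simp [List.length_eq_zero_iff.mp hu]

-- Over the empty alphabet every `k` qualifies, and `sSup` of the unbounded `ℕ` is the junk `0`.
lemma univIndex_eq_zero_of_isEmpty [IsEmpty α] (w : List α) : univIndex w = 0 := by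
  have huniv : {k | IsUniversal k w} = Set.univ := by
    refine Set.eq_univ_of_forall fun k u _ => ?_
    cases u with
    | nil => exact List.nil_sublist w
    | cons a _ => exact isEmptyElim a
  rw [univIndex, huniv, csSup_of_not_bddAbove not_bddAbove_univ, csSup_empty]
  rfl

lemma IsUniversal.append {a b : ℕ} {x y : List α}
    (hx : IsUniversal a x) (hy : IsUniversal b y) : IsUniversal (a + b) (x ++ y) := by
  intro u hu
  simpa using (hx (u.take a) (by simp [hu])).append (hy (u.drop a) (by simp [hu]))

lemma IsUniversal.left_or_right_of_append {a b : ℕ} {x y : List α}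
    (h : IsUniversal (a + b) (x ++ y)) : IsUniversal a x ∨ IsUniversal b y := by
  by_contra! hxy
  simp only [IsUniversal, not_forall] at hxy
  obtain ⟨⟨u, hu, hux⟩, ⟨v, hv, hvy⟩⟩ := hxy
  exact (h (u ++ v) (by simp [hu, hv])).left_or_right_of_append.elim hux hvy

variable [Nonempty α]

lemma IsUniversal.length_le {k : ℕ} {w : List α} (h : IsUniversal k w) : k ≤ w.length := by
  obtain ⟨a⟩ := ‹Nonempty α›
  simpa using (h (List.replicate k a) (by simp)).length_le

lemma IsUniversal.mono {j k : ℕ} {w : List α} (hjk : j ≤ k) (h : IsUniversal k w) :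
    IsUniversal j w := by
  obtain ⟨a⟩ := ‹Nonempty α›
  intro u hu
  exact (List.sublist_append_left u _).trans (h (u ++ List.replicate (k - j) a) (by simp; omega))

lemma bddAbove_setOf_isUniversal (w : List α) : BddAbove {k | IsUniversal k w} :=
  ⟨w.length, fun _ hk => hk.length_le⟩

lemma isUniversal_univIndex (w : List α) : IsUniversal (univIndex w) w :=
  Nat.sSup_mem ⟨0, isUniversal_zero w⟩ (bddAbove_setOf_isUniversal w)

lemma IsUniversal.le_univIndex {k : ℕ} {w : List α} (h : IsUniversal k w) : k ≤ univIndex w :=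
  le_csSup (bddAbove_setOf_isUniversal w) h

lemma isUniversal_iff_le_univIndex {k : ℕ} {w : List α} : IsUniversal k w ↔ k ≤ univIndex w :=
  ⟨IsUniversal.le_univIndex, fun h => (isUniversal_univIndex w).mono h⟩

lemma univIndex_add_univIndex_le (x y : List α) :
    univIndex x + univIndex y ≤ univIndex (x ++ y) :=
  ((isUniversal_univIndex x).append (isUniversal_univIndex y)).le_univIndex

lemma univIndex_append_le (x y : List α) :
    univIndex (x ++ y) ≤ univIndex x + univIndex y + 1 := by
  by_contra! h
  have hxy : IsUniversal (univIndex x + 1 + (univIndex y + 1)) (x ++ y) :=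
    isUniversal_iff_le_univIndex.mpr (by omega)
  rcases hxy.left_or_right_of_append with hx | hy
  · exact absurd hx.le_univIndex (by omega)
  · exact absurd hy.le_univIndex (by omega)

end Universality

lemma wpow_succ (w : List α) (n : ℕ) : wpow w (n + 1) = w ++ wpow w n := by
  simp [wpow, List.replicate_succ]

theorem univIndex_pow_growth_bounds [Fintype α] (w : List α) (k : ℕ)
    (hk : univIndex w = k) (s : ℕ) (hs : 1 ≤ s) :
    univIndex (wpow w (s - 1)) + k ≤ univIndex (wpow w s) ∧
      univIndex (wpow w s) ≤ univIndex (wpow w (s - 1)) + k + 1 := by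
  obtain ⟨n, rfl⟩ := Nat.exists_eq_add_of_le' hs
  subst hk
  rw [Nat.add_sub_cancel, wpow_succ]
  rcases isEmpty_or_nonempty α with hα | hα
  · simp only [univIndex_eq_zero_of_isEmpty]
    omega
  · have hlower := univIndex_add_univIndex_le w (wpow w n)
    have hupper := univIndex_append_le w (wpow w n)
    omega
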